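/- In the Hecke algebra H_{n+1}(q), the partial antisymmetrizer satisfies the inductive identity y_{n+1/k,n+1−k} = q^k · y_{n/k,n−k} + (−1)^{n+1−k} · y_{n/k−1,n+1−k} · T_c, where c is the cycle (n+1)↷k, for 1 ≤ k ≤ n. -/

import Mathlib

/-- The basic transposition `τ_i = (i, i+1)` (0-based) as a permutation of `ℕ`. -/
def tau (i : ℕ) : Equiv.Perm ℕ := Equiv.swap i (i + 1)

/-- The Coxeter length of a permutation of `{0, …, n-1}`, computed as its number of
inversions. -/
def invLen (n : ℕ) (σ : Equiv.Perm ℕ) : ℕ :=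
  ((Finset.range n ×ˢ Finset.range n).filter (fun p => p.1 < p.2 ∧ σ p.2 < σ p.1)).card

/-- The canonical embedding of the symmetric group `S_n = Perm (Fin n)` into the
permutations of `ℕ` (fixing every `m ≥ n`). -/
def permOfFin {n : ℕ} (σ : Equiv.Perm (Fin n)) : Equiv.Perm ℕ :=
  σ.extendDomain Fin.equivSubtype

/-- The cycle `i ↷ j`: for `i < j` it is `τ_i τ_{i+1} ⋯ τ_{j-1}`; for `i > j` it is
`τ_{i-1} ⋯ τ_{j+1} τ_j`; for `i = j` the identity. -/
def cyc (i j : ℕ) : Equiv.Perm ℕ :=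
  if i ≤ j then ((List.range (j - i)).map (fun t => tau (i + t))).prod
  else ((List.range (i - j)).map (fun t => tau (i - 1 - t))).prod

/-- `σ` is a distinguished left coset representative of the Young subgroup `S_{a,b}`
of `S_{a+b}`: it is increasing on the blocks `{0,…,a-1}` and `{a,…,a+b-1}`. -/
def isDist (a b : ℕ) (σ : Equiv.Perm ℕ) : Prop :=
  ∀ i : ℕ, i + 1 < a + b → i + 1 ≠ a → σ i < σ (i + 1)

open Classical in
/-- The partial antisymmetrizer `y_{a+b/a,b} = y(S_{a+b}/S_{a,b})
  = ∑_{d ∈ D(S_{a+b}/S_{a,b})} (−1)^{ℓ(d)} q^{ab − ℓ(d)} T_d`. -/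
noncomputable def yQ {K H : Type*} [Field K] [Ring H] [Algebra K H]
    (T : Equiv.Perm ℕ → H) (q : K) (a b : ℕ) : H :=
  ∑ σ : Equiv.Perm (Fin (a + b)),
    if isDist a b (permOfFin σ) then
      ((-1 : K) ^ invLen (a + b) (permOfFin σ) * q ^ (a * b - invLen (a + b) (permOfFin σ))) •
        T (permOfFin σ)
    else 0

/-!
Split the distinguished representatives `τ` of `S_{n+1}/S_{k,n+1-k}` according to whether `τ`
fixes the last point `n` (points are `0, …, n`). Those that do are exactly the distinguished
representatives of `S_n/S_{k,n-k}`, with the same length, so their coefficient only gains `q^k`.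
Those that do not send the last point `k-1` of the first block to `n`, and are exactly the
products `d * c` with `d` distinguished for `S_n/S_{k-1,n+1-k}` and `c = cyc n (k-1)`. Passing
from `d` to `d * c` moves the value `n` from position `n` to position `k-1`, past the `n+1-k`
smaller values `d (k-1), …, d (n-1)`, one length-increasing transposition at a time; so
`ℓ(d c) = ℓ(d) + ℓ(c)` and `T_{dc} = T_d T_c`.
-/

section

open Equiv Finset

lemma permOfFin_apply_of_lt {n : ℕ} (σ : Perm (Fin n)) {i : ℕ} (h : i < n) :
    permOfFin σ i = σ ⟨i, h⟩ := by
  rw [permOfFin, Perm.extendDomain_apply_subtype σ Fin.equivSubtype h]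
  rfl

lemma permOfFin_apply_of_le {n : ℕ} (σ : Perm (Fin n)) {i : ℕ} (h : n ≤ i) :
    permOfFin σ i = i :=
  Perm.extendDomain_apply_not_subtype σ Fin.equivSubtype (by omega)

lemma permOfFin_injective {n : ℕ} : Function.Injective (permOfFin (n := n)) :=
  Perm.extendDomainHom_injective Fin.equivSubtype

def SupportedBelow (m : ℕ) (τ : Perm ℕ) : Prop := ∀ i, m ≤ i → τ i = i

namespace SupportedBelow

variable {m : ℕ} {τ : Perm ℕ}

lemma mono (hτ : SupportedBelow m τ) {m' : ℕ} (h : m ≤ m') : SupportedBelow m' τ :=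
  fun i hi => hτ i (h.trans hi)

lemma mul {σ : Perm ℕ} (hτ : SupportedBelow m τ) (hσ : SupportedBelow m σ) :
    SupportedBelow m (τ * σ) :=
  fun i hi => by rw [Perm.mul_apply, hσ i hi, hτ i hi]

lemma apply_lt (hτ : SupportedBelow m τ) {x : ℕ} (hx : x < m) : τ x < m := by
  by_contra! h
  exact absurd (τ.injective (hτ _ h)) (by omega)

lemma of_succ (hτ : SupportedBelow (m + 1) τ) (h : τ m = m) : SupportedBelow m τ := by
  intro i hi
  rcases hi.eq_or_lt with rfl | hi
  exacts [h, hτ i hi]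

lemma exists_permOfFin (hτ : SupportedBelow m τ) : ∃ σ : Perm (Fin m), permOfFin σ = τ := by
  have hlt : ∀ x, τ x < m ↔ x < m := fun x =>
    ⟨fun hx => by_contra fun h => by rw [hτ x (by omega)] at hx; omega, hτ.apply_lt⟩
  refine ⟨permCongr Fin.equivSubtype.symm (τ.subtypePerm hlt), Equiv.ext fun i => ?_⟩
  by_cases hi : i < m
  · simp [permOfFin_apply_of_lt _ hi, permCongr, Fin.equivSubtype]
  · rw [permOfFin_apply_of_le _ (by omega), hτ i (by omega)]

end SupportedBelow

lemma supportedBelow_permOfFin {m : ℕ} (σ : Perm (Fin m)) : SupportedBelow m (permOfFin σ) :=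
  fun _ hi => permOfFin_apply_of_le σ hi

noncomputable def permsBelow (m : ℕ) : Finset (Perm ℕ) :=
  (univ : Finset (Perm (Fin m))).map ⟨permOfFin, permOfFin_injective⟩

lemma mem_permsBelow {m : ℕ} {τ : Perm ℕ} : τ ∈ permsBelow m ↔ SupportedBelow m τ := by
  refine ⟨?_, fun h => ?_⟩
  · rw [permsBelow, mem_map]
    rintro ⟨σ, -, rfl⟩
    exact supportedBelow_permOfFin σ
  · obtain ⟨σ, rfl⟩ := h.exists_permOfFin
    exact mem_map.2 ⟨σ, mem_univ σ, rfl⟩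

open Classical in
/-- `D(S_{a+b}/S_{a,b})`. -/
noncomputable def distReps (a b : ℕ) : Finset (Perm ℕ) :=
  (permsBelow (a + b)).filter (isDist a b)

lemma mem_distReps {a b : ℕ} {τ : Perm ℕ} :
    τ ∈ distReps a b ↔ SupportedBelow (a + b) τ ∧ isDist a b τ := by
  classical
  rw [distReps, mem_filter, mem_permsBelow]

lemma yQ_eq_sum_distReps {K H : Type*} [Field K] [Ring H] [Algebra K H]
    (T : Perm ℕ → H) (q : K) (a b : ℕ) :
    yQ T q a b = ∑ d ∈ distReps a b,
      ((-1 : K) ^ invLen (a + b) d * q ^ (a * b - invLen (a + b) d)) • T d := by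
  classical
  rw [distReps, sum_filter, permsBelow, sum_map]
  rfl

lemma invLen_one (m : ℕ) : invLen m 1 = 0 := by
  rw [invLen, card_eq_zero, filter_eq_empty_iff]
  intro p _
  simp only [Perm.one_apply]
  omega

lemma invLen_succ_of_supportedBelow {m : ℕ} {τ : Perm ℕ} (hτ : SupportedBelow m τ) :
    invLen (m + 1) τ = invLen m τ := by
  unfold invLen
  congr 1
  ext ⟨x, y⟩
  simp only [mem_filter, mem_product, mem_range]
  refine ⟨fun ⟨⟨hx, hy⟩, hxy, hinv⟩ => ⟨⟨by omega, ?_⟩, hxy, hinv⟩,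
    fun ⟨⟨hx, hy⟩, h⟩ => ⟨⟨by omega, by omega⟩, h⟩⟩
  by_contra! hy'
  have := hτ.apply_lt (x := x) (by omega)
  rw [hτ y hy'] at hinv
  omega

lemma tau_lt_iff {j m x : ℕ} (hj : j + 1 < m) : tau j x < m ↔ x < m := by
  rw [tau, swap_apply_def]
  split_ifs <;> omega

lemma invLen_mul_tau {m j : ℕ} (hj : j + 1 < m) {σ : Perm ℕ} (h : σ j < σ (j + 1)) :
    invLen m (σ * tau j) = invLen m σ + 1 := by
  have hrelabel : invLen m (σ * tau j) = #((range m ×ˢ range m).filter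
      fun p => tau j p.1 < tau j p.2 ∧ σ p.2 < σ p.1) := by
    rw [invLen]
    refine card_equiv (prodCongr (tau j) (tau j)) fun p => ?_
    rw [mem_filter, mem_filter]
    simp only [mem_product, mem_range, prodCongr_apply, Prod.map, Perm.mul_apply, tau_lt_iff hj]
    simp only [tau, swap_apply_self]
  -- relabelling by `τ_j` preserves the order of every pair except `{j, j + 1}`
  have hins : ((range m ×ˢ range m).filter fun p => tau j p.1 < tau j p.2 ∧ σ p.2 < σ p.1)
      = insert (j + 1, j) ((range m ×ˢ range m).filter fun p => p.1 < p.2 ∧ σ p.2 < σ p.1) := by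
    ext ⟨x, y⟩
    simp only [mem_filter, mem_product, mem_range, mem_insert, Prod.mk.injEq]
    simp only [tau, swap_apply_def]
    split_ifs <;> subst_vars <;> omega
  rw [hrelabel, hins, card_insert_of_notMem (by simp), invLen]

lemma cyc_eq_cyc_succ_mul_tau {i j : ℕ} (h : j < i) : cyc i j = cyc i (j + 1) * tau j := by
  rw [cyc, cyc, if_neg (by omega)]
  split_ifs with h'
  · obtain rfl : i = j + 1 := by omega
    simp
  · rw [show i - j = i - (j + 1) + 1 by omega, List.range_succ, List.map_append, List.prod_append]
    simp [show i - 1 - (i - (j + 1)) = j by omega]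

lemma cyc_apply {i j : ℕ} (h : j ≤ i) (x : ℕ) :
    cyc i j x = if x < j then x else if x = j then i else if x ≤ i then x - 1 else x := by
  induction h using Nat.decreasingInduction generalizing x with
  | self =>
    simp only [cyc, le_refl, if_true, Nat.sub_self, List.range_zero, List.map_nil, List.prod_nil,
      Perm.one_apply]
    split_ifs <;> omega
  | of_succ j hj ih =>
    rw [cyc_eq_cyc_succ_mul_tau hj, Perm.mul_apply, ih, tau, swap_apply_def]
    split_ifs <;> omega

lemma cyc_inv_apply {i j : ℕ} (h : j ≤ i) (x : ℕ) :
    (cyc i j)⁻¹ x = if x < j then x else if x = i then j else if x < i then x + 1 else x := by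
  rw [Perm.inv_eq_iff_eq, cyc_apply h]
  split_ifs <;> omega

lemma supportedBelow_cyc {i j : ℕ} (h : j ≤ i) : SupportedBelow (i + 1) (cyc i j) := by
  intro x hx
  rw [cyc_apply h]
  split_ifs <;> omega

lemma invLen_mul_cyc {i j : ℕ} {d : Perm ℕ} (hd : SupportedBelow i d) (h : j ≤ i) :
    invLen (i + 1) (d * cyc i j) = invLen (i + 1) d + (i - j) := by
  induction h using Nat.decreasingInduction with
  | self => simp [cyc]
  | of_succ j hj ih =>
    have hlt : (d * cyc i (j + 1)) j < (d * cyc i (j + 1)) (j + 1) := by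
      rw [Perm.mul_apply, Perm.mul_apply, cyc_apply hj, cyc_apply hj, if_pos (by omega),
        if_neg (by omega), if_pos rfl, hd i le_rfl]
      exact hd.apply_lt hj
    rw [cyc_eq_cyc_succ_mul_tau hj, ← mul_assoc, invLen_mul_tau (by omega) hlt, ih]
    omega

lemma invLen_cyc {i j : ℕ} (h : j ≤ i) : invLen (i + 1) (cyc i j) = i - j := by
  simpa [invLen_one] using invLen_mul_cyc (d := 1) (fun _ _ => rfl) h

lemma isDist.apply_lt_apply {a b : ℕ} {σ : Perm ℕ} (h : isDist a b σ) {i j : ℕ} (hij : i < j)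
    (hj : j < a + b) (hblock : j < a ∨ a ≤ i) : σ i < σ j := by
  induction j with
  | zero => omega
  | succ j ih =>
    have hstep := h j hj (by omega)
    rcases Nat.lt_succ_iff_lt_or_eq.1 hij with hij | rfl
    exacts [(ih hij (by omega) (by omega)).trans hstep, hstep]

lemma isDist.invLen_le {a b : ℕ} {σ : Perm ℕ} (h : isDist a b σ) :
    invLen (a + b) σ ≤ a * b :=
  calc invLen (a + b) σ ≤ #(range a ×ˢ Ico a (a + b)) := by
        refine card_le_card fun ⟨x, y⟩ hp => ?_
        simp only [mem_filter, mem_product, mem_range, mem_Ico] at hp ⊢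
        by_contra hxy
        exact lt_asymm (h.apply_lt_apply hp.2.1 hp.1.2 (by omega)) hp.2.2
    _ = a * b := by simp

lemma isDist_succ_right_iff {a b : ℕ} {τ : Perm ℕ} (hτ : SupportedBelow (a + b) τ) :
    isDist a (b + 1) τ ↔ isDist a b τ := by
  refine ⟨fun h i hi hia => h i (by omega) hia, fun h i hi hia => ?_⟩
  rcases (show i + 1 < a + b ∨ i + 1 = a + b by omega) with hi | hi
  · exact h i hi hia
  · rw [hi, hτ _ le_rfl]
    exact hτ.apply_lt (by omega)

lemma filter_distReps_apply_eq (a b : ℕ) :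
    (distReps a (b + 1)).filter (fun τ => τ (a + b) = a + b) = distReps a b := by
  ext τ
  rw [mem_filter, mem_distReps, mem_distReps]
  constructor
  · rintro ⟨⟨hτ, hd⟩, hlast⟩
    have hτ' : SupportedBelow (a + b) τ := SupportedBelow.of_succ hτ hlast
    exact ⟨hτ', (isDist_succ_right_iff hτ').1 hd⟩
  · rintro ⟨hτ, hd⟩
    exact ⟨⟨hτ.mono (by omega), (isDist_succ_right_iff hτ).2 hd⟩, hτ (a + b) le_rfl⟩

lemma isDist.apply_eq_of_apply_ne {a b : ℕ} {τ : Perm ℕ} (hd : isDist (a + 1) (b + 1) τ)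
    (hτ : SupportedBelow (a + 1 + (b + 1)) τ) (hlast : τ (a + 1 + b) ≠ a + 1 + b) :
    τ a = a + 1 + b := by
  obtain ⟨x, hx⟩ := τ.surjective (a + 1 + b)
  have hxlt : x < a + 1 + b := by
    by_contra! h
    rcases h.eq_or_lt with rfl | h
    · exact hlast hx
    · rw [hτ x (by omega)] at hx
      omega
  obtain rfl : x = a := by
    by_contra hxa
    have := hd x (by omega) (by omega)
    have := hτ.apply_lt (x := x + 1) (by omega)
    omega
  exact hx

lemma isDist_mul_cyc {a b : ℕ} {d : Perm ℕ} (hd : SupportedBelow (a + (b + 1)) d)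
    (hdist : isDist a (b + 1) d) : isDist (a + 1) (b + 1) (d * cyc (a + 1 + b) a) := by
  intro i hi hia
  have hc := cyc_apply (show a ≤ a + 1 + b by omega)
  rw [Perm.mul_apply, Perm.mul_apply, hc, hc]
  rcases lt_trichotomy (i + 1) a with h | h | h
  · rw [if_pos (show i < a by omega), if_pos h]
    exact hdist i (by omega) (by omega)
  · rw [if_pos (show i < a by omega), if_neg (show ¬i + 1 < a by omega), if_pos h,
      hd (a + 1 + b) (by omega)]
    have := hd.apply_lt (x := i) (by omega)
    omega
  · rw [if_neg (show ¬i < a by omega), if_neg (show i ≠ a by omega),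
      if_pos (show i ≤ a + 1 + b by omega), if_neg (show ¬i + 1 < a by omega),
      if_neg (show i + 1 ≠ a by omega), if_pos (show i + 1 ≤ a + 1 + b by omega)]
    obtain ⟨i, rfl⟩ : ∃ i', i = i' + 1 := ⟨i - 1, by omega⟩
    exact hdist i (by omega) (by omega)

lemma isDist_mul_cyc_inv {a b : ℕ} {τ : Perm ℕ} (hdist : isDist (a + 1) (b + 1) τ) :
    isDist a (b + 1) (τ * (cyc (a + 1 + b) a)⁻¹) := by
  intro i hi hia
  have hc := cyc_inv_apply (show a ≤ a + 1 + b by omega)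
  rw [Perm.mul_apply, Perm.mul_apply, hc, hc]
  rcases (show i + 1 < a ∨ a ≤ i by omega) with h | h
  · rw [if_pos (show i < a by omega), if_pos h]
    exact hdist i (by omega) (by omega)
  · rw [if_neg (show ¬i < a by omega), if_neg (show i ≠ a + 1 + b by omega),
      if_pos (show i < a + 1 + b by omega), if_neg (show ¬i + 1 < a by omega),
      if_neg (show i + 1 ≠ a + 1 + b by omega), if_pos (show i + 1 < a + 1 + b by omega)]
    exact hdist (i + 1) (by omega) (by omega)

lemma filter_distReps_apply_ne (a b : ℕ) :
    (distReps (a + 1) (b + 1)).filter (fun τ => ¬τ (a + 1 + b) = a + 1 + b)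
      = (distReps a (b + 1)).map (Equiv.mulRight (cyc (a + 1 + b) a)).toEmbedding := by
  have hca : a ≤ a + 1 + b := by omega
  ext τ
  simp only [mem_filter, mem_map_equiv, mulRight_symm, coe_mulRight, mem_distReps]
  constructor
  · rintro ⟨⟨hτ, hdist⟩, hlast⟩
    refine ⟨fun x hx => ?_, isDist_mul_cyc_inv hdist⟩
    rw [Perm.mul_apply, cyc_inv_apply hca]
    rcases hx.eq_or_lt with rfl | hx
    · rw [if_neg (by omega), if_pos (by omega)]
      have := hdist.apply_eq_of_apply_ne hτ hlast
      omega
    · rw [if_neg (by omega), if_neg (by omega), if_neg (by omega)]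
      exact hτ x (by omega)
  · rintro ⟨hd, hdist⟩
    obtain ⟨d, rfl⟩ : ∃ d, τ = d * cyc (a + 1 + b) a := ⟨_, (inv_mul_cancel_right τ _).symm⟩
    rw [mul_inv_cancel_right] at hd hdist
    refine ⟨⟨(hd.mono (by omega)).mul (supportedBelow_cyc hca), isDist_mul_cyc hd hdist⟩, ?_⟩
    rw [Perm.mul_apply, cyc_apply hca, if_neg (by omega), if_neg (by omega), if_pos (by omega)]
    have := hd.apply_lt (x := a + 1 + b - 1) (by omega)
    omega

theorem yQ_succ_succ {K H : Type*} [Field K] [Ring H] [Algebra K H] (T : Perm ℕ → H) (q : K)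
    (a b : ℕ)
    (hTmul : ∀ π σ : Perm ℕ, SupportedBelow (a + 1 + b + 1) π → SupportedBelow (a + 1 + b + 1) σ →
      invLen (a + 1 + b + 1) (π * σ) = invLen (a + 1 + b + 1) π + invLen (a + 1 + b + 1) σ →
      T (π * σ) = T π * T σ) :
    yQ T q (a + 1) (b + 1) = q ^ (a + 1) • yQ T q (a + 1) b
      + (-1 : K) ^ (b + 1) • (yQ T q a (b + 1) * T (cyc (a + 1 + b) a)) := by
  have hca : a ≤ a + 1 + b := by omega
  have hsize : a + 1 + (b + 1) = a + 1 + b + 1 := rfl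
  rw [yQ_eq_sum_distReps, ← sum_filter_add_sum_filter_not _ fun τ => τ (a + 1 + b) = a + 1 + b,
    filter_distReps_apply_eq, filter_distReps_apply_ne, sum_map, yQ_eq_sum_distReps,
    yQ_eq_sum_distReps, smul_sum, sum_mul, smul_sum]
  congr 1
  · refine sum_congr rfl fun τ hτ => ?_
    obtain ⟨hτ, hdist⟩ := mem_distReps.1 hτ
    have hle := hdist.invLen_le
    rw [hsize, invLen_succ_of_supportedBelow hτ, smul_smul,
      show (a + 1) * (b + 1) - invLen (a + 1 + b) τ = (a + 1) + ((a + 1) * b - invLen (a + 1 + b) τ)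
        by rw [Nat.mul_succ]; omega, pow_add]
    ring_nf
  · refine sum_congr rfl fun d hd => ?_
    obtain ⟨hd, hdist⟩ := mem_distReps.1 hd
    have hle := hdist.invLen_le
    have hd' : SupportedBelow (a + 1 + b) d := hd.mono (by omega)
    rw [hsize]
    have hlen : invLen (a + 1 + b + 1) (d * cyc (a + 1 + b) a)
        = invLen (a + (b + 1)) d + (b + 1) := by
      rw [invLen_mul_cyc hd' hca, invLen_succ_of_supportedBelow hd',
        show a + 1 + b = a + (b + 1) by omega, show a + (b + 1) - a = b + 1 by omega]
    have hT : T (d * cyc (a + 1 + b) a) = T d * T (cyc (a + 1 + b) a) :=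
      hTmul _ _ (hd.mono (by omega)) (supportedBelow_cyc hca)
        (by rw [invLen_mul_cyc hd' hca, invLen_cyc hca])
    simp only [coe_toEmbedding, coe_mulRight]
    rw [hlen, hT, smul_mul_assoc, smul_smul,
      show (a + 1) * (b + 1) - (invLen (a + (b + 1)) d + (b + 1))
        = a * (b + 1) - invLen (a + (b + 1)) d by rw [Nat.succ_mul]; omega, pow_add]
    ring_nf

end

theorem stmt7_general {K H : Type*} [Field K] [Ring H] [Algebra K H] (q : K) (n k : ℕ)
    (hk1 : 1 ≤ k) (hk2 : k ≤ n)
    (T : Equiv.Perm ℕ → H)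
    (hTmul : ∀ π σ : Equiv.Perm ℕ,
      (∀ m, n + 1 ≤ m → π m = m) → (∀ m, n + 1 ≤ m → σ m = m) →
      invLen (n + 1) (π * σ) = invLen (n + 1) π + invLen (n + 1) σ → T (π * σ) = T π * T σ) :
    yQ T q k (n + 1 - k)
      = q ^ k • yQ T q k (n - k)
        + ((-1 : K) ^ (n + 1 - k)) • (yQ T q (k - 1) (n + 1 - k) * T (cyc n (k - 1))) := by
  obtain ⟨a, rfl⟩ : ∃ a, k = a + 1 := ⟨k - 1, by omega⟩
  obtain ⟨b, rfl⟩ : ∃ b, n = a + 1 + b := ⟨n - (a + 1), by omega⟩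
  rw [show a + 1 + b + 1 - (a + 1) = b + 1 by omega, show a + 1 + b - (a + 1) = b by omega,
    Nat.add_sub_cancel]
  exact yQ_succ_succ T q a b hTmul

/-- In the Hecke algebra `H_{n+1}(q)`, the partial antisymmetrizers satisfy the inductive
identity `y_{n+1/k,n+1−k} = q^k · y_{n/k,n−k} + (−1)^{n+1−k} · y_{n/k−1,n+1−k} · T_c`,
where `c` is the cycle `(n+1) ↷ k` (0-based: `cyc n (k-1)`), for `1 ≤ k ≤ n`. -/
theorem stmt7 {K H : Type*} [Field K] [Ring H] [Algebra K H] (q : K) (n k : ℕ)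
    (hk1 : 1 ≤ k) (hk2 : k ≤ n)
    (T : Equiv.Perm ℕ → H)
    (hT1 : T 1 = 1)
    (hTq : ∀ i : ℕ, i + 1 < n + 1 → (T (tau i) - algebraMap K H q) * (T (tau i) + 1) = 0)
    (hTmul : ∀ π σ : Equiv.Perm ℕ,
      (∀ m, n + 1 ≤ m → π m = m) → (∀ m, n + 1 ≤ m → σ m = m) →
      invLen (n + 1) (π * σ) = invLen (n + 1) π + invLen (n + 1) σ → T (π * σ) = T π * T σ) :
    yQ T q k (n + 1 - k)
      = q ^ k • yQ T q k (n - k)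
        + ((-1 : K) ^ (n + 1 - k)) • (yQ T q (k - 1) (n + 1 - k) * T (cyc n (k - 1))) :=
  stmt7_general q n k hk1 hk2 T hTmul
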